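/- arXiv:2306.03837 — 6 statements merged into one kernel-verified Lean document; each statement's English description precedes it below -/
import Mathlib

section
/- Let U : ℝ → ℝ be smooth and positive on an open interval I, let a ∈ ℝ, m ≠ 0, ε ∈ {1,−1}, and assume m²U(s)² − a² > 0 and Q(s) := m²U(s)²(1 − m²U′(s)²) − a² > 0 for all s ∈ I. Define ρ(s) = √(m²U(s)² − a²), let λ : I → ℝ satisfy λ′(s) = ε·m·U(s)·√(Q(s))/(m²U(s)² − a²), and let v : I × ℝ → ℝ satisfy ∂v/∂t(s,t) = 1/m and ∂v/∂s(s,t) = −ε·a·√(Q(s))/(m·U(s)·(m²U(s)² − a²)). Define ψ : I × ℝ → ℝ³ by ψ(s,t) = (ρ(s)·cos v(s,t), −ρ(s)·sin v(s,t), λ(s) + a·v(s,t)). Then the first fundamental form of ψ with respect to the Euclidean metric is ds² + U(s)² dt², i.e. for all (s,t): ⟨∂ψ/∂s, ∂ψ/∂s⟩ = 1, ⟨∂ψ/∂s, ∂ψ/∂t⟩ = 0, and ⟨∂ψ/∂t, ∂ψ/∂t⟩ = U(s)², where ⟨·,·⟩ is the Euclidean inner product on ℝ³. -/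
/-- Euclidean inner product on `ℝ × ℝ × ℝ`. -/
noncomputable def eDot (p q : ℝ × ℝ × ℝ) : ℝ :=
  p.1 * q.1 + p.2.1 * q.2.1 + p.2.2 * q.2.2

private lemma bour_aux1 (m u u' a ε q r P Qv : ℝ) (hm : m ≠ 0) (hu : u ≠ 0) (hP : P ≠ 0)
    (hPdef : P = m^2*u^2 - a^2) (hQ : Qv = m^2*u^2*(1-m^2*u'^2) - a^2)
    (hq : q^2 = Qv) (hr : r^2 = P) (hε : ε^2 = 1) :
    (m^2*(2*u^1*u')/(2*r))^2 + r^2 * (-(ε*a*q)/(m*u*P))^2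
      + (ε*m*u*q/P + a*(-(ε*a*q)/(m*u*P)))^2 = 1 := by
  have e1 : (m^2*(2*u^1*u')/(2*r))^2 = m^4*u^2*u'^2/P := by
    rw [div_pow, mul_pow 2 r, hr]
    field_simp [hP]
  have e2 : r^2 * (-(ε*a*q)/(m*u*P))^2 = a^2*Qv/(m^2*u^2*P) := by
    have h : (-(ε*a*q))^2 = a^2*Qv := by
      rw [neg_sq, mul_pow, mul_pow, hε, hq]; ring
    rw [div_pow, h, hr]
    field_simp [hP, hm, hu]
  have e3 : (ε*m*u*q/P + a*(-(ε*a*q)/(m*u*P)))^2 = Qv/(m^2*u^2) := by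
    have h : ε*m*u*q/P + a*(-(ε*a*q)/(m*u*P)) = ε*q/(m*u) := by
      subst hPdef
      field_simp
      ring
    rw [h, div_pow, mul_pow, mul_pow, hε, hq, one_mul]
  rw [e1, e2, e3]
  subst hPdef hQ
  field_simp
  ring

private lemma bour_aux2 (m u a ε q r P : ℝ) (hm : m ≠ 0) (hu : u ≠ 0) (hP : P ≠ 0)
    (hPdef : P = m^2*u^2 - a^2) (hr : r^2 = P) :
    r^2 * (-(ε*a*q)/(m*u*P)) + a*(ε*m*u*q/P) + a^2*(-(ε*a*q)/(m*u*P)) = 0 := by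
  rw [hr]
  subst hPdef
  field_simp
  ring

private lemma bour_aux3 (m u a r P : ℝ) (hm : m ≠ 0)
    (hPdef : P = m^2*u^2 - a^2) (hr : r^2 = P) :
    r^2/m^2 + a^2/m^2 = u^2 := by
  rw [hr, hPdef]
  field_simp
  ring

/-- **Bour's theorem for helicoidal surfaces in Euclidean `ℝ³`** (first fundamental
form of the Bour parametrization): the induced metric of `ψ` is `ds² + U(s)² dt²`. -/
theorem bour_helicoidal_first_fundamental_form
    (c d : ℝ) (U U' lam : ℝ → ℝ) (v : ℝ → ℝ → ℝ) (a m ε : ℝ)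
    (hm : m ≠ 0) (hε : ε = 1 ∨ ε = -1)
    (hUsmooth : ContDiffOn ℝ (⊤ : ℕ∞) U (Set.Ioo c d))
    (hU' : ∀ s ∈ Set.Ioo c d, HasDerivAt U (U' s) s)
    (hUpos : ∀ s ∈ Set.Ioo c d, 0 < U s)
    (Q : ℝ → ℝ)
    (hQdef : ∀ s, Q s = m ^ 2 * (U s) ^ 2 * (1 - m ^ 2 * (U' s) ^ 2) - a ^ 2)
    (hrad : ∀ s ∈ Set.Ioo c d, 0 < m ^ 2 * (U s) ^ 2 - a ^ 2)
    (hQpos : ∀ s ∈ Set.Ioo c d, 0 < Q s)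
    (rho : ℝ → ℝ)
    (hrho : ∀ s, rho s = Real.sqrt (m ^ 2 * (U s) ^ 2 - a ^ 2))
    (hlam : ∀ s ∈ Set.Ioo c d,
      HasDerivAt lam (ε * m * U s * Real.sqrt (Q s) / (m ^ 2 * (U s) ^ 2 - a ^ 2)) s)
    (hvt : ∀ s ∈ Set.Ioo c d, ∀ t : ℝ, HasDerivAt (fun t' => v s t') (1 / m) t)
    (hvs : ∀ s ∈ Set.Ioo c d, ∀ t : ℝ,
      HasDerivAt (fun s' => v s' t)
        (-(ε * a * Real.sqrt (Q s)) / (m * U s * (m ^ 2 * (U s) ^ 2 - a ^ 2))) s)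
    (ψ : ℝ → ℝ → ℝ × ℝ × ℝ)
    (hψ : ∀ s t, ψ s t =
      (rho s * Real.cos (v s t), -(rho s * Real.sin (v s t)), lam s + a * v s t)) :
    ∀ s ∈ Set.Ioo c d, ∀ t : ℝ, ∀ ψs ψt : ℝ × ℝ × ℝ,
      HasDerivAt (fun s' => ψ s' t) ψs s →
      HasDerivAt (fun t' => ψ s t') ψt t →
      eDot ψs ψs = 1 ∧ eDot ψs ψt = 0 ∧ eDot ψt ψt = (U s) ^ 2 := by
  intro s hs t ψs ψt hψs hψt
  have hu : 0 < U s := hUpos s hs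
  have hP : 0 < m ^ 2 * (U s) ^ 2 - a ^ 2 := hrad s hs
  have hQs : 0 < Q s := hQpos s hs
  have hε2 : ε ^ 2 = 1 := by rcases hε with h | h <;> subst h <;> norm_num
  have hq2 : (Real.sqrt (Q s)) ^ 2 = Q s := Real.sq_sqrt hQs.le
  have hr2 : (rho s) ^ 2 = m ^ 2 * (U s) ^ 2 - a ^ 2 := by
    rw [hrho s]; exact Real.sq_sqrt hP.le
  -- derivative of rho
  have hf : HasDerivAt (fun s' => m ^ 2 * (U s') ^ 2 - a ^ 2)
      (m ^ 2 * (2 * (U s) ^ 1 * U' s)) s :=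
    (((hU' s hs).pow 2).const_mul (m ^ 2)).sub_const (a ^ 2)
  have hrhoD : HasDerivAt rho
      (m ^ 2 * (2 * (U s) ^ 1 * U' s) / (2 * Real.sqrt (m ^ 2 * (U s) ^ 2 - a ^ 2))) s := by
    have h := hf.sqrt hP.ne'
    have heq : rho = fun y => Real.sqrt (m ^ 2 * (U y) ^ 2 - a ^ 2) := funext hrho
    rw [heq]
    exact h
  -- explicit s-derivative
  have hS : HasDerivAt (fun s' => ψ s' t)
      (m ^ 2 * (2 * (U s) ^ 1 * U' s) / (2 * Real.sqrt (m ^ 2 * (U s) ^ 2 - a ^ 2))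
          * Real.cos (v s t)
        + rho s * (-Real.sin (v s t)
          * (-(ε * a * Real.sqrt (Q s)) / (m * U s * (m ^ 2 * (U s) ^ 2 - a ^ 2)))),
       -(m ^ 2 * (2 * (U s) ^ 1 * U' s) / (2 * Real.sqrt (m ^ 2 * (U s) ^ 2 - a ^ 2))
          * Real.sin (v s t)
        + rho s * (Real.cos (v s t)
          * (-(ε * a * Real.sqrt (Q s)) / (m * U s * (m ^ 2 * (U s) ^ 2 - a ^ 2))))),
       ε * m * U s * Real.sqrt (Q s) / (m ^ 2 * (U s) ^ 2 - a ^ 2)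
        + a * (-(ε * a * Real.sqrt (Q s)) / (m * U s * (m ^ 2 * (U s) ^ 2 - a ^ 2)))) s := by
    have heq : (fun s' => ψ s' t)
        = fun s' => (rho s' * Real.cos (v s' t), -(rho s' * Real.sin (v s' t)),
            lam s' + a * v s' t) := funext fun s' => hψ s' t
    rw [heq]
    exact (hrhoD.mul ((hvs s hs t).cos)).prodMk
      (((hrhoD.mul ((hvs s hs t).sin)).neg).prodMk
        ((hlam s hs).add (((hvs s hs t)).const_mul a)))
  -- explicit t-derivative
  have hT : HasDerivAt (fun t' => ψ s t')
      (rho s * (-Real.sin (v s t) * (1 / m)),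
       -(rho s * (Real.cos (v s t) * (1 / m))),
       a * (1 / m)) t := by
    have heq : (fun t' => ψ s t')
        = fun t' => (rho s * Real.cos (v s t'), -(rho s * Real.sin (v s t')),
            lam s + a * v s t') := funext fun t' => hψ s t'
    rw [heq]
    exact (((hvt s hs t).cos).const_mul (rho s)).prodMk
      (((((hvt s hs t).sin).const_mul (rho s)).neg).prodMk
        (((hvt s hs t).const_mul a).const_add (lam s)))
  have hψs' := hψs.unique hS
  have hψt' := hψt.unique hT
  subst hψs' hψt'
  -- rewrite sqrt of the radicand as rho s
  have hrr : Real.sqrt (m ^ 2 * (U s) ^ 2 - a ^ 2) = rho s := (hrho s).symm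
  rw [hrr]
  have hsc : Real.sin (v s t) ^ 2 + Real.cos (v s t) ^ 2 = 1 :=
    Real.sin_sq_add_cos_sq (v s t)
  have hkey1 := bour_aux1 m (U s) (U' s) a ε (Real.sqrt (Q s)) (rho s)
    (m ^ 2 * (U s) ^ 2 - a ^ 2) (Q s) hm hu.ne' hP.ne' rfl (hQdef s) hq2 hr2 hε2
  have hkey2 := bour_aux2 m (U s) a ε (Real.sqrt (Q s)) (rho s)
    (m ^ 2 * (U s) ^ 2 - a ^ 2) hm hu.ne' hP.ne' rfl hr2
  have hkey3 := bour_aux3 m (U s) a (rho s) (m ^ 2 * (U s) ^ 2 - a ^ 2) hm rfl hr2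
  refine ⟨?_, ?_, ?_⟩
  · simp only [eDot]
    set dd := m ^ 2 * (2 * (U s) ^ 1 * U' s) / (2 * rho s) with hdd
    set vs' := -(ε * a * Real.sqrt (Q s)) / (m * U s * (m ^ 2 * (U s) ^ 2 - a ^ 2)) with hvs'
    linear_combination hkey1 + (dd ^ 2 + (rho s) ^ 2 * vs' ^ 2) * hsc
  · simp only [eDot]
    set vs' := -(ε * a * Real.sqrt (Q s)) / (m * U s * (m ^ 2 * (U s) ^ 2 - a ^ 2)) with hvs'
    linear_combination (1 / m) * hkey2 + ((rho s) ^ 2 * vs' / m) * hsc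
  · simp only [eDot]
    linear_combination hkey3 + ((rho s) ^ 2 / m ^ 2) * hsc
end

section
/- Let U : ℝ → ℝ be smooth and positive on an open interval I and a ∈ ℝ. Let m₁, m₂ be nonzero reals such that, for k = 1, 2, mₖ²U(s)² − a² > 0 and Qₖ(s) := mₖ²U(s)²(1 − mₖ²U′(s)²) − a² > 0 for all s ∈ I, and let ψ_{m₁}, ψ_{m₂} : I × ℝ → ℝ³ be the corresponding Bour parametrizations, namely ψ_m(s,t) = (ρ_m(s)·cos v_m(s,t), −ρ_m(s)·sin v_m(s,t), λ_m(s) + a·v_m(s,t)) with ρ_m(s) = √(m²U(s)² − a²), λ_m′(s) = m·U(s)·√(Q_m(s))/(m²U(s)² − a²), ∂v_m/∂t = 1/m, ∂v_m/∂s = −a·√(Q_m(s))/(m·U(s)·(m²U(s)² − a²)). Then ψ_{m₁} and ψ_{m₂} induce the same first fundamental form: for all (s,t) and all i,j ∈ {s,t}, ⟨∂ψ_{m₁}/∂i, ∂ψ_{m₁}/∂j⟩ = ⟨∂ψ_{m₂}/∂i, ∂ψ_{m₂}/∂j⟩, where ⟨·,·⟩ is the Euclidean inner product; in particular the identity map in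 the (s,t) parameters is an isometry between the two helicoidal surfaces. -/
/-- Derivatives of a single Bour parametrization. -/
lemma bour_hasDerivAt
    (U U' rho lam : ℝ → ℝ) (v : ℝ → ℝ → ℝ) (ψ : ℝ → ℝ → ℝ × ℝ × ℝ)
    (a m L vs vt s t : ℝ)
    (hU : HasDerivAt U (U' s) s)
    (hrad : 0 < m ^ 2 * (U s) ^ 2 - a ^ 2)
    (hrho : ∀ x, rho x = Real.sqrt (m ^ 2 * (U x) ^ 2 - a ^ 2))
    (hlam : HasDerivAt lam L s)
    (hvt : HasDerivAt (fun t' => v s t') vt t)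
    (hvs : HasDerivAt (fun s' => v s' t) vs s)
    (hψ : ∀ x y, ψ x y =
      (rho x * Real.cos (v x y), -(rho x * Real.sin (v x y)), lam x + a * v x y)) :
    HasDerivAt (fun s' => ψ s' t)
      (m ^ 2 * U s * U' s / rho s * Real.cos (v s t) - rho s * Real.sin (v s t) * vs,
       -(m ^ 2 * U s * U' s / rho s * Real.sin (v s t) + rho s * Real.cos (v s t) * vs),
       L + a * vs) s ∧
    HasDerivAt (fun t' => ψ s t')
      (-(rho s * Real.sin (v s t) * vt), -(rho s * Real.cos (v s t) * vt), a * vt) t := by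
  have hradne : m ^ 2 * (U s) ^ 2 - a ^ 2 ≠ 0 := ne_of_gt hrad
  have hinner : HasDerivAt (fun x => m ^ 2 * (U x) ^ 2 - a ^ 2) (m ^ 2 * (2 * U s * U' s)) s := by
    have h := ((hU.pow 2).const_mul (m ^ 2)).sub_const (a ^ 2)
    refine h.congr_deriv ?_
    push_cast
    ring
  have hρfun : HasDerivAt (fun x => Real.sqrt (m ^ 2 * (U x) ^ 2 - a ^ 2))
      (m ^ 2 * (2 * U s * U' s) / (2 * Real.sqrt (m ^ 2 * (U s) ^ 2 - a ^ 2))) s :=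
    hinner.sqrt hradne
  have hrhoeq : rho = fun x => Real.sqrt (m ^ 2 * (U x) ^ 2 - a ^ 2) := funext hrho
  have hρ : HasDerivAt rho (m ^ 2 * U s * U' s / rho s) s := by
    rw [hrho s, hrhoeq]
    convert hρfun using 1
    ring
  constructor
  · have heq : (fun s' => ψ s' t) = fun s' =>
        ((rho s' * Real.cos (v s' t), -(rho s' * Real.sin (v s' t)),
          lam s' + a * v s' t) : ℝ × ℝ × ℝ) := funext fun s' => hψ s' t
    rw [heq]
    have h1 : HasDerivAt (fun s' => rho s' * Real.cos (v s' t))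
        (m ^ 2 * U s * U' s / rho s * Real.cos (v s t) - rho s * Real.sin (v s t) * vs) s := by
      have := hρ.mul hvs.cos
      refine this.congr_deriv ?_
      ring
    have h2 : HasDerivAt (fun s' => -(rho s' * Real.sin (v s' t)))
        (-(m ^ 2 * U s * U' s / rho s * Real.sin (v s t) + rho s * Real.cos (v s t) * vs)) s := by
      have := (hρ.mul hvs.sin).neg
      refine this.congr_deriv ?_
      ring
    have h3 : HasDerivAt (fun s' => lam s' + a * v s' t) (L + a * vs) s :=
      hlam.add (hvs.const_mul a)
    exact h1.prodMk (h2.prodMk h3)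
  · have heq : (fun t' => ψ s t') = fun t' =>
        ((rho s * Real.cos (v s t'), -(rho s * Real.sin (v s t')),
          lam s + a * v s t') : ℝ × ℝ × ℝ) := funext fun t' => hψ s t'
    rw [heq]
    have h1 : HasDerivAt (fun t' => rho s * Real.cos (v s t'))
        (-(rho s * Real.sin (v s t) * vt)) t := by
      have := hvt.cos.const_mul (rho s)
      refine this.congr_deriv ?_
      ring
    have h2 : HasDerivAt (fun t' => -(rho s * Real.sin (v s t')))
        (-(rho s * Real.cos (v s t) * vt)) t := by
      have := (hvt.sin.const_mul (rho s)).neg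
      refine this.congr_deriv ?_
      ring
    have h3 : HasDerivAt (fun t' => lam s + a * v s t') (a * vt) t :=
      (hvt.const_mul a).const_add (lam s)
    exact h1.prodMk (h2.prodMk h3)

/-- First fundamental form of a single Bour parametrization is `(1, 0, U²)`. -/
lemma bour_fff (m a Us U's Q L vv : ℝ) (hm : m ≠ 0) (hUs : 0 < Us)
    (hR : 0 < m ^ 2 * Us ^ 2 - a ^ 2) (hQpos : 0 < Q)
    (hQdef : Q = m ^ 2 * Us ^ 2 * (1 - m ^ 2 * U's ^ 2) - a ^ 2)
    (ρ ρ' vs vt : ℝ)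
    (hρ : ρ = Real.sqrt (m ^ 2 * Us ^ 2 - a ^ 2))
    (hρ' : ρ' = m ^ 2 * Us * U's / ρ)
    (hvs : vs = -(a * Real.sqrt Q) / (m * Us * (m ^ 2 * Us ^ 2 - a ^ 2)))
    (hvt : vt = 1 / m)
    (hL : L = m * Us * Real.sqrt Q / (m ^ 2 * Us ^ 2 - a ^ 2)) :
    eDot (ρ' * Real.cos vv - ρ * Real.sin vv * vs,
          -(ρ' * Real.sin vv + ρ * Real.cos vv * vs), L + a * vs)
         (ρ' * Real.cos vv - ρ * Real.sin vv * vs,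
          -(ρ' * Real.sin vv + ρ * Real.cos vv * vs), L + a * vs) = 1 ∧
    eDot (ρ' * Real.cos vv - ρ * Real.sin vv * vs,
          -(ρ' * Real.sin vv + ρ * Real.cos vv * vs), L + a * vs)
         (-(ρ * Real.sin vv * vt), -(ρ * Real.cos vv * vt), a * vt) = 0 ∧
    eDot (-(ρ * Real.sin vv * vt), -(ρ * Real.cos vv * vt), a * vt)
         (-(ρ * Real.sin vv * vt), -(ρ * Real.cos vv * vt), a * vt) = Us ^ 2 := by
  have hUsne : Us ≠ 0 := ne_of_gt hUs
  have hRne : m ^ 2 * Us ^ 2 - a ^ 2 ≠ 0 := ne_of_gt hR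
  have hρpos : 0 < ρ := hρ ▸ Real.sqrt_pos.mpr hR
  have hρne : ρ ≠ 0 := ne_of_gt hρpos
  have hρ2 : ρ ^ 2 = m ^ 2 * Us ^ 2 - a ^ 2 := by rw [hρ]; exact Real.sq_sqrt hR.le
  set q := Real.sqrt Q with hq
  have hq2 : q ^ 2 = Q := Real.sq_sqrt hQpos.le
  have key : q ^ 2 = (m ^ 2 * Us ^ 2 - a ^ 2) - m ^ 4 * Us ^ 2 * U's ^ 2 := by
    rw [hq2, hQdef]; ring
  have hLa : L + a * vs = q / (m * Us) := by
    rw [hL, hvs]; field_simp; ring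
  have hpyth : Real.sin vv ^ 2 + Real.cos vv ^ 2 = 1 := Real.sin_sq_add_cos_sq vv
  have h1 : ρ' ^ 2 = m ^ 4 * Us ^ 2 * U's ^ 2 / (m ^ 2 * Us ^ 2 - a ^ 2) := by
    rw [hρ', div_pow, hρ2]; ring
  have h2 : ρ ^ 2 * vs ^ 2 = a ^ 2 * q ^ 2 / (m ^ 2 * Us ^ 2 * (m ^ 2 * Us ^ 2 - a ^ 2)) := by
    rw [hvs, hρ2]; field_simp
  have h3 : (L + a * vs) ^ 2 = q ^ 2 / (m ^ 2 * Us ^ 2) := by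
    rw [hLa]; field_simp
  have hE : ρ' ^ 2 + ρ ^ 2 * vs ^ 2 + (L + a * vs) ^ 2 = 1 := by
    rw [h1, h2, h3, key]; field_simp; ring
  have hF : ρ ^ 2 * vs * vt + (L + a * vs) * (a * vt) = 0 := by
    rw [hρ2, hLa, hvs, hvt]; field_simp; ring
  have hG : ρ ^ 2 * vt ^ 2 + (a * vt) ^ 2 = Us ^ 2 := by
    rw [hρ2, hvt]; field_simp; ring
  refine ⟨?_, ?_, ?_⟩
  · simp only [eDot]
    linear_combination (ρ' ^ 2 + ρ ^ 2 * vs ^ 2) * hpyth + hE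
  · simp only [eDot]
    linear_combination (ρ ^ 2 * vs * vt) * hpyth + hF
  · simp only [eDot]
    linear_combination (ρ ^ 2 * vt ^ 2) * hpyth + hG

/-- **The Bour family**: for fixed pitch `a` and metric `ds² + U(s)² dt²` in natural
parameters, the Bour parametrizations `ψ_{m₁}` and `ψ_{m₂}` of helicoidal surfaces in
Euclidean `ℝ³` induce the same first fundamental form; in particular the identity map
in the `(s,t)` parameters is an isometry between the two helicoidal surfaces. -/
theorem bour_family_isometric
    (c d : ℝ) (U U' : ℝ → ℝ) (a : ℝ)
    (hUsmooth : ContDiffOn ℝ (⊤ : ℕ∞) U (Set.Ioo c d))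
    (hU' : ∀ s ∈ Set.Ioo c d, HasDerivAt U (U' s) s)
    (hUpos : ∀ s ∈ Set.Ioo c d, 0 < U s)
    (m₁ m₂ : ℝ) (hm₁ : m₁ ≠ 0) (hm₂ : m₂ ≠ 0)
    (Q₁ Q₂ : ℝ → ℝ)
    (hQ₁def : ∀ s, Q₁ s = m₁ ^ 2 * (U s) ^ 2 * (1 - m₁ ^ 2 * (U' s) ^ 2) - a ^ 2)
    (hQ₂def : ∀ s, Q₂ s = m₂ ^ 2 * (U s) ^ 2 * (1 - m₂ ^ 2 * (U' s) ^ 2) - a ^ 2)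
    (hrad₁ : ∀ s ∈ Set.Ioo c d, 0 < m₁ ^ 2 * (U s) ^ 2 - a ^ 2)
    (hrad₂ : ∀ s ∈ Set.Ioo c d, 0 < m₂ ^ 2 * (U s) ^ 2 - a ^ 2)
    (hQ₁pos : ∀ s ∈ Set.Ioo c d, 0 < Q₁ s)
    (hQ₂pos : ∀ s ∈ Set.Ioo c d, 0 < Q₂ s)
    (rho₁ rho₂ lam₁ lam₂ : ℝ → ℝ) (v₁ v₂ : ℝ → ℝ → ℝ)
    (hrho₁ : ∀ s, rho₁ s = Real.sqrt (m₁ ^ 2 * (U s) ^ 2 - a ^ 2))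
    (hrho₂ : ∀ s, rho₂ s = Real.sqrt (m₂ ^ 2 * (U s) ^ 2 - a ^ 2))
    (hlam₁ : ∀ s ∈ Set.Ioo c d,
      HasDerivAt lam₁ (m₁ * U s * Real.sqrt (Q₁ s) / (m₁ ^ 2 * (U s) ^ 2 - a ^ 2)) s)
    (hlam₂ : ∀ s ∈ Set.Ioo c d,
      HasDerivAt lam₂ (m₂ * U s * Real.sqrt (Q₂ s) / (m₂ ^ 2 * (U s) ^ 2 - a ^ 2)) s)
    (hv₁t : ∀ s ∈ Set.Ioo c d, ∀ t : ℝ, HasDerivAt (fun t' => v₁ s t') (1 / m₁) t)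
    (hv₂t : ∀ s ∈ Set.Ioo c d, ∀ t : ℝ, HasDerivAt (fun t' => v₂ s t') (1 / m₂) t)
    (hv₁s : ∀ s ∈ Set.Ioo c d, ∀ t : ℝ,
      HasDerivAt (fun s' => v₁ s' t)
        (-(a * Real.sqrt (Q₁ s)) / (m₁ * U s * (m₁ ^ 2 * (U s) ^ 2 - a ^ 2))) s)
    (hv₂s : ∀ s ∈ Set.Ioo c d, ∀ t : ℝ,
      HasDerivAt (fun s' => v₂ s' t)
        (-(a * Real.sqrt (Q₂ s)) / (m₂ * U s * (m₂ ^ 2 * (U s) ^ 2 - a ^ 2))) s)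
    (ψ₁ ψ₂ : ℝ → ℝ → ℝ × ℝ × ℝ)
    (hψ₁ : ∀ s t, ψ₁ s t =
      (rho₁ s * Real.cos (v₁ s t), -(rho₁ s * Real.sin (v₁ s t)), lam₁ s + a * v₁ s t))
    (hψ₂ : ∀ s t, ψ₂ s t =
      (rho₂ s * Real.cos (v₂ s t), -(rho₂ s * Real.sin (v₂ s t)), lam₂ s + a * v₂ s t)) :
    ∀ s ∈ Set.Ioo c d, ∀ t : ℝ, ∀ ψ₁s ψ₁t ψ₂s ψ₂t : ℝ × ℝ × ℝ,
      HasDerivAt (fun s' => ψ₁ s' t) ψ₁s s →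
      HasDerivAt (fun t' => ψ₁ s t') ψ₁t t →
      HasDerivAt (fun s' => ψ₂ s' t) ψ₂s s →
      HasDerivAt (fun t' => ψ₂ s t') ψ₂t t →
      eDot ψ₁s ψ₁s = eDot ψ₂s ψ₂s ∧
      eDot ψ₁s ψ₁t = eDot ψ₂s ψ₂t ∧
      eDot ψ₁t ψ₁t = eDot ψ₂t ψ₂t := by
  intro s hs t ψ₁s ψ₁t ψ₂s ψ₂t h1s h1t h2s h2t
  obtain ⟨hd1s, hd1t⟩ := bour_hasDerivAt U U' rho₁ lam₁ v₁ ψ₁ a m₁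
    (m₁ * U s * Real.sqrt (Q₁ s) / (m₁ ^ 2 * (U s) ^ 2 - a ^ 2))
    (-(a * Real.sqrt (Q₁ s)) / (m₁ * U s * (m₁ ^ 2 * (U s) ^ 2 - a ^ 2)))
    (1 / m₁) s t (hU' s hs) (hrad₁ s hs) hrho₁ (hlam₁ s hs) (hv₁t s hs t) (hv₁s s hs t) hψ₁
  obtain ⟨hd2s, hd2t⟩ := bour_hasDerivAt U U' rho₂ lam₂ v₂ ψ₂ a m₂
    (m₂ * U s * Real.sqrt (Q₂ s) / (m₂ ^ 2 * (U s) ^ 2 - a ^ 2))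
    (-(a * Real.sqrt (Q₂ s)) / (m₂ * U s * (m₂ ^ 2 * (U s) ^ 2 - a ^ 2)))
    (1 / m₂) s t (hU' s hs) (hrad₂ s hs) hrho₂ (hlam₂ s hs) (hv₂t s hs t) (hv₂s s hs t) hψ₂
  have e1s := h1s.unique hd1s
  have e1t := h1t.unique hd1t
  have e2s := h2s.unique hd2s
  have e2t := h2t.unique hd2t
  subst e1s e1t e2s e2t
  obtain ⟨hE₁, hF₁, hG₁⟩ := bour_fff m₁ a (U s) (U' s) (Q₁ s)
    (m₁ * U s * Real.sqrt (Q₁ s) / (m₁ ^ 2 * (U s) ^ 2 - a ^ 2)) (v₁ s t)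
    hm₁ (hUpos s hs) (hrad₁ s hs) (hQ₁pos s hs) (hQ₁def s)
    (rho₁ s) (m₁ ^ 2 * U s * U' s / rho₁ s)
    (-(a * Real.sqrt (Q₁ s)) / (m₁ * U s * (m₁ ^ 2 * (U s) ^ 2 - a ^ 2))) (1 / m₁)
    (hrho₁ s) rfl rfl rfl rfl
  obtain ⟨hE₂, hF₂, hG₂⟩ := bour_fff m₂ a (U s) (U' s) (Q₂ s)
    (m₂ * U s * Real.sqrt (Q₂ s) / (m₂ ^ 2 * (U s) ^ 2 - a ^ 2)) (v₂ s t)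
    hm₂ (hUpos s hs) (hrad₂ s hs) (hQ₂pos s hs) (hQ₂def s)
    (rho₂ s) (m₂ ^ 2 * U s * U' s / rho₂ s)
    (-(a * Real.sqrt (Q₂ s)) / (m₂ * U s * (m₂ ^ 2 * (U s) ^ 2 - a ^ 2))) (1 / m₂)
    (hrho₂ s) rfl rfl rfl rfl
  exact ⟨by rw [hE₁, hE₂], by rw [hF₁, hF₂], by rw [hG₁, hG₂]⟩
end

section
/- Let U : ℝ → ℝ be smooth and positive on an open interval I, m ≠ 0 with m·U(s) > 0 and m²U′(s)² < 1 for all s ∈ I, and ε ∈ {1,−1}. Let λ : I → ℝ satisfy λ′(s) = ε·√(1 − m²U′(s)²), and define the surface of revolution ψ : I × ℝ → ℝ³ by ψ(s,t) = (m·U(s)·cos(t/m), −m·U(s)·sin(t/m), λ(s)). Then the first fundamental form of ψ with respect to the Euclidean metric is ds² + U(s)² dt²: for all (s,t), ⟨∂ψ/∂s, ∂ψ/∂s⟩ = 1, ⟨∂ψ/∂s, ∂ψ/∂t⟩ = 0, and ⟨∂ψ/∂t, ∂ψ/∂t⟩ = U(s)². -/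
/-- **Bour's theorem, rotational case (pitch `a = 0`)**: the surface of revolution
`ψ(s,t) = (m·U(s)·cos(t/m), −m·U(s)·sin(t/m), λ(s))` has first fundamental form
`ds² + U(s)² dt²` with respect to the Euclidean metric. -/
theorem bour_rotational_first_fundamental_form
    (c d : ℝ) (U U' lam : ℝ → ℝ) (m ε : ℝ)
    (hm : m ≠ 0) (hε : ε = 1 ∨ ε = -1)
    (hUsmooth : ContDiffOn ℝ (⊤ : ℕ∞) U (Set.Ioo c d))
    (hU' : ∀ s ∈ Set.Ioo c d, HasDerivAt U (U' s) s)
    (hUpos : ∀ s ∈ Set.Ioo c d, 0 < U s)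
    (hmU : ∀ s ∈ Set.Ioo c d, 0 < m * U s)
    (hU'small : ∀ s ∈ Set.Ioo c d, m ^ 2 * (U' s) ^ 2 < 1)
    (hlam : ∀ s ∈ Set.Ioo c d,
      HasDerivAt lam (ε * Real.sqrt (1 - m ^ 2 * (U' s) ^ 2)) s)
    (ψ : ℝ → ℝ → ℝ × ℝ × ℝ)
    (hψ : ∀ s t, ψ s t =
      (m * U s * Real.cos (t / m), -(m * U s * Real.sin (t / m)), lam s)) :
    ∀ s ∈ Set.Ioo c d, ∀ t : ℝ, ∀ ψs ψt : ℝ × ℝ × ℝ,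
      HasDerivAt (fun s' => ψ s' t) ψs s →
      HasDerivAt (fun t' => ψ s t') ψt t →
      eDot ψs ψs = 1 ∧ eDot ψs ψt = 0 ∧ eDot ψt ψt = (U s) ^ 2 := by
  intro s hs t ψs ψt hψs hψt
  -- explicit derivatives
  have hds : HasDerivAt (fun s' => ψ s' t)
      (m * U' s * Real.cos (t / m), -(m * U' s * Real.sin (t / m)),
        ε * Real.sqrt (1 - m ^ 2 * (U' s) ^ 2)) s := by
    have h1 : HasDerivAt (fun s' => m * U s' * Real.cos (t / m))
        (m * U' s * Real.cos (t / m)) s :=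
      (((hU' s hs).const_mul m).mul_const _)
    have h2 : HasDerivAt (fun s' => -(m * U s' * Real.sin (t / m)))
        (-(m * U' s * Real.sin (t / m))) s :=
      (((hU' s hs).const_mul m).mul_const _).neg
    have := h1.prodMk (h2.prodMk (hlam s hs))
    simpa only [← hψ] using this
  have hdt : HasDerivAt (fun t' => ψ s t')
      (-(U s * Real.sin (t / m)), -(U s * Real.cos (t / m)), (0 : ℝ)) t := by
    have harg : HasDerivAt (fun t' : ℝ => t' / m) (1 / m) t := by
      simpa using (hasDerivAt_id t).div_const m
    have hcos : HasDerivAt (fun t' => Real.cos (t' / m))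
        (-Real.sin (t / m) * (1 / m)) t := (Real.hasDerivAt_cos _).comp t harg
    have hsin : HasDerivAt (fun t' => Real.sin (t' / m))
        (Real.cos (t / m) * (1 / m)) t := (Real.hasDerivAt_sin _).comp t harg
    have h1 : HasDerivAt (fun t' => m * U s * Real.cos (t' / m))
        (-(U s * Real.sin (t / m))) t := by
      have := hcos.const_mul (m * U s)
      refine this.congr_deriv ?_
      field_simp
    have h2 : HasDerivAt (fun t' => -(m * U s * Real.sin (t' / m)))
        (-(U s * Real.cos (t / m))) t := by
      have := (hsin.const_mul (m * U s)).neg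
      refine this.congr_deriv ?_
      field_simp
    have h3 : HasDerivAt (fun _ : ℝ => lam s) (0 : ℝ) t := hasDerivAt_const _ _
    have := h1.prodMk (h2.prodMk h3)
    simpa only [← hψ] using this
  have hψs' : ψs = (m * U' s * Real.cos (t / m), -(m * U' s * Real.sin (t / m)),
      ε * Real.sqrt (1 - m ^ 2 * (U' s) ^ 2)) := hψs.unique hds
  have hψt' : ψt = (-(U s * Real.sin (t / m)), -(U s * Real.cos (t / m)), (0 : ℝ)) :=
    hψt.unique hdt
  subst hψs' hψt'
  have hsq : Real.sqrt (1 - m ^ 2 * (U' s) ^ 2) ^ 2 = 1 - m ^ 2 * (U' s) ^ 2 :=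
    Real.sq_sqrt (by linarith [hU'small s hs])
  have hε2 : ε ^ 2 = 1 := by rcases hε with h | h <;> rw [h] <;> norm_num
  have hpyth : Real.cos (t / m) ^ 2 + Real.sin (t / m) ^ 2 = 1 := by
    rw [add_comm]; exact Real.sin_sq_add_cos_sq _
  refine ⟨?_, ?_, ?_⟩
  · simp only [eDot]
    nlinarith [hsq, hε2, hpyth]
  · simp only [eDot]; ring
  · simp only [eDot]
    nlinarith [hpyth]
end

section
/- Fix a ≠ 0 and for v ∈ ℝ define φ_v(x,y,z) = (x cos v + y sin v, y cos v − x sin v, z + a v). On the open set V ⊂ ℝ³ where x cos(z/a) − y sin(z/a) > 0, define ω(x,y,z) = √(x² + y² + a²) and θ(x,y,z) = (x sin(z/a) + y cos(z/a))/(x cos(z/a) − y sin(z/a)). Then: (i) ω and θ are invariant under the flow, i.e. ω(φ_v(p)) = ω(p) and θ(φ_v(p)) = θ(p) whenever p and φ_v(p) lie in V; and (ii) the Euclidean gradients of ω and θ are orthogonal at every point of V: ⟨∇ω, ∇θ⟩ = 0. -/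
/-- The helicoidal flow on `ℝ³` with axis the `z`-axis and pitch `a`. -/
noncomputable def helicoidalFlow (a v : ℝ) (p : ℝ × ℝ × ℝ) : ℝ × ℝ × ℝ :=
  (p.1 * Real.cos v + p.2.1 * Real.sin v,
   p.2.1 * Real.cos v - p.1 * Real.sin v,
   p.2.2 + a * v)

/-- The volume function `ω = √(x² + y² + a²)` of the principal orbits of the
helicoidal group with pitch `a`. -/
noncomputable def volumeFn (a : ℝ) (p : ℝ × ℝ × ℝ) : ℝ :=
  Real.sqrt (p.1 ^ 2 + p.2.1 ^ 2 + a ^ 2)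

/-- The second invariant function `θ` of the helicoidal group with pitch `a`. -/
noncomputable def thetaFn (a : ℝ) (p : ℝ × ℝ × ℝ) : ℝ :=
  (p.1 * Real.sin (p.2.2 / a) + p.2.1 * Real.cos (p.2.2 / a)) /
    (p.1 * Real.cos (p.2.2 / a) - p.2.1 * Real.sin (p.2.2 / a))

/-- On the open set `V` where `x cos(z/a) − y sin(z/a) > 0`, the functions `ω` and `θ`
are invariant under the helicoidal flow and their Euclidean gradients are orthogonal
at every point of `V`. -/
theorem volumeFn_thetaFn_invariant_and_orthogonal (a : ℝ) (ha : a ≠ 0)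
    (V : Set (ℝ × ℝ × ℝ))
    (hV : V = {p : ℝ × ℝ × ℝ |
      0 < p.1 * Real.cos (p.2.2 / a) - p.2.1 * Real.sin (p.2.2 / a)}) :
    (∀ p ∈ V, ∀ v : ℝ, helicoidalFlow a v p ∈ V →
      volumeFn a (helicoidalFlow a v p) = volumeFn a p ∧
      thetaFn a (helicoidalFlow a v p) = thetaFn a p) ∧
    (∀ p ∈ V, ∀ ω₁ ω₂ ω₃ θ₁ θ₂ θ₃ : ℝ,
      HasDerivAt (fun x => volumeFn a (x, p.2.1, p.2.2)) ω₁ p.1 →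
      HasDerivAt (fun y => volumeFn a (p.1, y, p.2.2)) ω₂ p.2.1 →
      HasDerivAt (fun z => volumeFn a (p.1, p.2.1, z)) ω₃ p.2.2 →
      HasDerivAt (fun x => thetaFn a (x, p.2.1, p.2.2)) θ₁ p.1 →
      HasDerivAt (fun y => thetaFn a (p.1, y, p.2.2)) θ₂ p.2.1 →
      HasDerivAt (fun z => thetaFn a (p.1, p.2.1, z)) θ₃ p.2.2 →
      ω₁ * θ₁ + ω₂ * θ₂ + ω₃ * θ₃ = 0) := by
  constructor
  · rintro ⟨x, y, z⟩ hp v hpv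
    constructor
    · simp only [volumeFn, helicoidalFlow]
      congr 1
      have h := Real.sin_sq_add_cos_sq v
      ring_nf
      nlinarith [h]
    · simp only [thetaFn, helicoidalFlow]
      have hz : (z + a * v) / a = z / a + v := by field_simp
      rw [hz, Real.sin_add, Real.cos_add]
      have h := Real.sin_sq_add_cos_sq v
      congr 1
      · linear_combination (x * Real.sin (z / a) + y * Real.cos (z / a)) * h
      · linear_combination (x * Real.cos (z / a) - y * Real.sin (z / a)) * h
  · rintro ⟨x, y, z⟩ hp ω₁ ω₂ ω₃ θ₁ θ₂ θ₃ hω₁ hω₂ hω₃ hθ₁ hθ₂ hθ₃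
    simp only [hV, Set.mem_setOf_eq] at hp
    set s : ℝ := Real.sin (z / a) with hs
    set c : ℝ := Real.cos (z / a) with hc
    have hscsq : s ^ 2 + c ^ 2 = 1 := Real.sin_sq_add_cos_sq (z / a)
    have hD : x * c - y * s ≠ 0 := ne_of_gt hp
    have hq : (0:ℝ) < x ^ 2 + y ^ 2 + a ^ 2 := by positivity
    have hω : Real.sqrt (x ^ 2 + y ^ 2 + a ^ 2) ≠ 0 := by
      exact ne_of_gt (Real.sqrt_pos.mpr hq)
    -- compute the true derivatives of ω
    have Hω₁ : HasDerivAt (fun t : ℝ => volumeFn a (t, y, z))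
        ((2 * x) / (2 * Real.sqrt (x ^ 2 + y ^ 2 + a ^ 2))) x := by
      have : HasDerivAt (fun t : ℝ => t ^ 2 + y ^ 2 + a ^ 2) (2 * x) x := by
        simpa [add_assoc] using ((hasDerivAt_pow 2 x).add_const (y ^ 2 + a ^ 2))
      simpa [volumeFn] using this.sqrt (ne_of_gt hq)
    have Hω₂ : HasDerivAt (fun t : ℝ => volumeFn a (x, t, z))
        ((2 * y) / (2 * Real.sqrt (x ^ 2 + y ^ 2 + a ^ 2))) y := by
      have h1 : HasDerivAt (fun t : ℝ => x ^ 2 + t ^ 2 + a ^ 2) (2 * y) y := by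
        have := ((hasDerivAt_pow 2 y).const_add (x ^ 2)).add_const (a ^ 2)
        simpa [add_assoc] using this
      simpa [volumeFn] using h1.sqrt (ne_of_gt hq)
    have Hω₃ : HasDerivAt (fun _ : ℝ => volumeFn a (x, y, z)) 0 z := hasDerivAt_const _ _
    have eω₁ : ω₁ = x / Real.sqrt (x ^ 2 + y ^ 2 + a ^ 2) := by
      have := hω₁.unique Hω₁
      rw [this]; field_simp
    have eω₂ : ω₂ = y / Real.sqrt (x ^ 2 + y ^ 2 + a ^ 2) := by
      have := hω₂.unique Hω₂
      rw [this]; field_simp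
    have eω₃ : ω₃ = 0 := hω₃.unique Hω₃
    -- compute the true derivatives of θ (only θ₁, θ₂ needed)
    have Hθ₁ : HasDerivAt (fun t : ℝ => thetaFn a (t, y, z))
        ((s * (x * c - y * s) - (x * s + y * c) * c) / (x * c - y * s) ^ 2) x := by
      have hn : HasDerivAt (fun t : ℝ => t * s + y * c) s x := by
        simpa using ((hasDerivAt_id x).mul_const s).add_const (y * c)
      have hd : HasDerivAt (fun t : ℝ => t * c - y * s) c x := by
        simpa using ((hasDerivAt_id x).mul_const c).sub_const (y * s)
      simpa [thetaFn, Pi.div_def] using hn.div hd hD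
    have Hθ₂ : HasDerivAt (fun t : ℝ => thetaFn a (x, t, z))
        ((c * (x * c - y * s) - (x * s + y * c) * (-s)) / (x * c - y * s) ^ 2) y := by
      have hn : HasDerivAt (fun t : ℝ => x * s + t * c) c y := by
        simpa using (((hasDerivAt_id y).mul_const c).const_add (x * s))
      have hd : HasDerivAt (fun t : ℝ => x * c - t * s) (-s) y := by
        simpa [Pi.sub_def] using (hasDerivAt_const y (x * c)).sub ((hasDerivAt_id y).mul_const s)
      simpa [thetaFn, Pi.div_def] using hn.div hd hD
    have eθ₁ : θ₁ = (s * (x * c - y * s) - (x * s + y * c) * c) / (x * c - y * s) ^ 2 :=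
      hθ₁.unique Hθ₁
    have eθ₂ : θ₂ = (c * (x * c - y * s) - (x * s + y * c) * (-s)) / (x * c - y * s) ^ 2 :=
      hθ₂.unique Hθ₂
    rw [eω₁, eω₂, eω₃, eθ₁, eθ₂]
    field_simp
    ring
end

section
/- Let a ≠ 0, let U : ℝ → ℝ be smooth and positive on an open interval I, let m ≠ 0 and ε ∈ {1,−1}, and assume m²U(s)² − a² > 0 and Q(s) := m²U(s)²(1 − m²U′(s)²) − a² > 0 for all s ∈ I. Let λ : I → ℝ satisfy λ′(s) = ε·m·U(s)·√(Q(s))/(m²U(s)² − a²) and suppose λ(s)/a avoids odd multiples of π/2 on I, and set θ(s) = tan(λ(s)/a). Then the curve s ↦ (ω(s), θ(s)) with ω(s) = m·U(s) has unit speed with respect to the quotient metric: for all s ∈ I, (ω(s)²/(ω(s)² − a²))·ω′(s)² + (a²(ω(s)² − a²)/(ω(s)²(1 + θ(s)²)²))·θ′(s)² = 1. -/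
/-- The profile curve `s ↦ (ω(s), θ(s)) = (m·U(s), tan(λ(s)/a))` of a Bour helicoidal
surface in Euclidean `ℝ³` has unit speed with respect to the quotient metric
`g̃ = ω²/(ω²−a²) dω² + a²(ω²−a²)/(ω²(1+θ²)²) dθ²` on the orbit space. -/
theorem bour_profile_curve_unit_speed
    (c d : ℝ) (U U' lam : ℝ → ℝ) (a m ε : ℝ)
    (ha : a ≠ 0) (hm : m ≠ 0) (hε : ε = 1 ∨ ε = -1)
    (hUsmooth : ContDiffOn ℝ (⊤ : ℕ∞) U (Set.Ioo c d))
    (hU' : ∀ s ∈ Set.Ioo c d, HasDerivAt U (U' s) s)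
    (hUpos : ∀ s ∈ Set.Ioo c d, 0 < U s)
    (Q : ℝ → ℝ)
    (hQdef : ∀ s, Q s = m ^ 2 * (U s) ^ 2 * (1 - m ^ 2 * (U' s) ^ 2) - a ^ 2)
    (hrad : ∀ s ∈ Set.Ioo c d, 0 < m ^ 2 * (U s) ^ 2 - a ^ 2)
    (hQpos : ∀ s ∈ Set.Ioo c d, 0 < Q s)
    (hlam : ∀ s ∈ Set.Ioo c d,
      HasDerivAt lam (ε * m * U s * Real.sqrt (Q s) / (m ^ 2 * (U s) ^ 2 - a ^ 2)) s)
    (hcos : ∀ s ∈ Set.Ioo c d, Real.cos (lam s / a) ≠ 0)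
    (ω θ : ℝ → ℝ)
    (hω : ∀ s, ω s = m * U s)
    (hθ : ∀ s, θ s = Real.tan (lam s / a)) :
    ∀ s ∈ Set.Ioo c d, ∀ ω' θ' : ℝ,
      HasDerivAt ω ω' s → HasDerivAt θ θ' s →
      (ω s) ^ 2 / ((ω s) ^ 2 - a ^ 2) * ω' ^ 2
        + a ^ 2 * ((ω s) ^ 2 - a ^ 2) / ((ω s) ^ 2 * (1 + (θ s) ^ 2) ^ 2) * θ' ^ 2
        = 1 := by
  intro s hs ω' θ' hω' hθ'
  have hωfun : ω = fun t => m * U t := funext hω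
  have hθfun : θ = fun t => Real.tan (lam t / a) := funext hθ
  -- identify ω'
  have hω'' : HasDerivAt ω (m * U' s) s := by
    rw [hωfun]; exact (hU' s hs).const_mul m
  have hωeq : ω' = m * U' s := (hω''.unique hω').symm
  -- identify θ'
  have hc : Real.cos (lam s / a) ≠ 0 := hcos s hs
  have hd : HasDerivAt (fun t => lam t / a)
      ((ε * m * U s * Real.sqrt (Q s) / (m ^ 2 * (U s) ^ 2 - a ^ 2)) / a) s :=
    (hlam s hs).div_const a
  have hθ'' : HasDerivAt θ
      (1 / Real.cos (lam s / a) ^ 2 *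
        ((ε * m * U s * Real.sqrt (Q s) / (m ^ 2 * (U s) ^ 2 - a ^ 2)) / a)) s := by
    rw [hθfun]
    exact (Real.hasDerivAt_tan hc).comp s hd
  have hθeq : θ' = 1 / Real.cos (lam s / a) ^ 2 *
      ((ε * m * U s * Real.sqrt (Q s) / (m ^ 2 * (U s) ^ 2 - a ^ 2)) / a) :=
    (hθ''.unique hθ').symm
  -- notation
  have h1θ : 1 + (θ s) ^ 2 = 1 / Real.cos (lam s / a) ^ 2 := by
    rw [hθ s, Real.tan_eq_sin_div_cos]
    field_simp
    exact Real.cos_sq_add_sin_sq _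
  have hQ : Real.sqrt (Q s) ^ 2 = Q s := Real.sq_sqrt (hQpos s hs).le
  have hε2 : ε ^ 2 = 1 := by rcases hε with h | h <;> rw [h] <;> norm_num
  have hrad' := hrad s hs
  have hradne : m ^ 2 * (U s) ^ 2 - a ^ 2 ≠ 0 := ne_of_gt hrad'
  have hUne : U s ≠ 0 := ne_of_gt (hUpos s hs)
  have hcsq : Real.cos (lam s / a) ^ 2 ≠ 0 := pow_ne_zero 2 hc
  have hradne' : (m * U s) ^ 2 - a ^ 2 ≠ 0 := by
    have : (m * U s) ^ 2 - a ^ 2 = m ^ 2 * U s ^ 2 - a ^ 2 := by ring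
    rw [this]; exact hradne
  have hQ2 : Real.sqrt (Q s) ^ 2 = m ^ 2 * U s ^ 2 * (1 - m ^ 2 * U' s ^ 2) - a ^ 2 := by
    rw [hQ, hQdef]
  rw [hωeq, hθeq, hω s, h1θ]
  rcases hε with rfl | rfl <;>
  · field_simp
    linear_combination hQ2
end

section
/- Fix κ, τ, a ∈ ℝ. Let U : ℝ → ℝ be smooth and positive on an open interval I, let m ≠ 0 and ε ∈ {1,−1}. Assume for all s ∈ I: m²U(s)² − a² > 0; Δ(s) := (1 − 2aτ)² + (4τ² − κ)(m²U(s)² − a²) > 0; D(s) := (1 + √Δ(s))² − 4τ²m²U(s)² > 0; and, with ρ(s) := 2√((m²U(s)² − a²)/D(s)) and B(s) := 1 + (κ/4)ρ(s)² > 0, the radicand R(s) := ρ(s)² − m⁴U(s)²U′(s)²(4 + κρ(s)²)²/(16Δ(s)) is positive. Let λ : I → ℝ satisfy λ′(s) = ε·(m·U(s)·(4 + κρ(s)²)/(4ρ(s)²))·√(R(s)), and let v : I × ℝ → ℝ satisfy ∂v/∂t = 1/m and ∂v/∂s(s,t) = −ε·((4τ − aκ)ρ(s)² − 4a)/(4m·U(s)·ρ(s)²)·√(R(s)).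 Define ψ(s,t) = (ρ(s), v(s,t), −λ(s) + a·v(s,t)) in cylindrical coordinates (r, ϑ, z). Then the first fundamental form of ψ with respect to the BCV metric g_{κ,τ} = dr²/B² + r²(1+τ²r²)/B² dϑ² + dz² − 2τr²/B dϑ⊗dz (B = 1 + (κ/4)r²) is ds² + U(s)² dt²: for all (s,t), g_{κ,τ}(∂ψ/∂s, ∂ψ/∂s) = 1, g_{κ,τ}(∂ψ/∂s, ∂ψ/∂t) = 0, and g_{κ,τ}(∂ψ/∂t, ∂ψ/∂t) = U(s)². -/
set_option maxHeartbeats 4000000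


/-- The Bianchi–Cartan–Vranceanu metric `g_{κ,τ}` in cylindrical coordinates
`(r, ϑ, z)`, evaluated at the point `p` on the pair of tangent vectors `X`, `Y`. -/
noncomputable def bcvInner (κ τ : ℝ) (p X Y : ℝ × ℝ × ℝ) : ℝ :=
  X.1 * Y.1 / (1 + κ / 4 * p.1 ^ 2) ^ 2
    + p.1 ^ 2 * (1 + τ ^ 2 * p.1 ^ 2) / (1 + κ / 4 * p.1 ^ 2) ^ 2 * (X.2.1 * Y.2.1)
    + X.2.2 * Y.2.2
    - τ * p.1 ^ 2 / (1 + κ / 4 * p.1 ^ 2) * (X.2.1 * Y.2.2 + X.2.2 * Y.2.1)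

/-- **Bour's theorem for helicoidal surfaces in BCV spaces**: the helicoidal surface
`ψ(s,t) = (ρ(s), v(s,t), −λ(s) + a·v(s,t))` produced by the integration procedure has
first fundamental form `ds² + U(s)² dt²` with respect to the BCV metric `g_{κ,τ}`. -/
theorem bour_bcv_first_fundamental_form
    (κ τ a : ℝ) (c d : ℝ) (U U' lam : ℝ → ℝ) (v : ℝ → ℝ → ℝ) (m ε : ℝ)
    (hm : m ≠ 0) (hε : ε = 1 ∨ ε = -1)
    (hUsmooth : ContDiffOn ℝ (⊤ : ℕ∞) U (Set.Ioo c d))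
    (hU' : ∀ s ∈ Set.Ioo c d, HasDerivAt U (U' s) s)
    (hUpos : ∀ s ∈ Set.Ioo c d, 0 < U s)
    (hrad : ∀ s ∈ Set.Ioo c d, 0 < m ^ 2 * (U s) ^ 2 - a ^ 2)
    (Δ : ℝ → ℝ)
    (hΔdef : ∀ s, Δ s = (1 - 2 * a * τ) ^ 2 + (4 * τ ^ 2 - κ) * (m ^ 2 * (U s) ^ 2 - a ^ 2))
    (hΔpos : ∀ s ∈ Set.Ioo c d, 0 < Δ s)
    (D : ℝ → ℝ)
    (hDdef : ∀ s, D s = (1 + Real.sqrt (Δ s)) ^ 2 - 4 * τ ^ 2 * m ^ 2 * (U s) ^ 2)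
    (hDpos : ∀ s ∈ Set.Ioo c d, 0 < D s)
    (rho : ℝ → ℝ)
    (hrho : ∀ s, rho s = 2 * Real.sqrt ((m ^ 2 * (U s) ^ 2 - a ^ 2) / D s))
    (B : ℝ → ℝ) (hBdef : ∀ s, B s = 1 + κ / 4 * (rho s) ^ 2)
    (hBpos : ∀ s ∈ Set.Ioo c d, 0 < B s)
    (R : ℝ → ℝ)
    (hRdef : ∀ s, R s = (rho s) ^ 2
      - m ^ 4 * (U s) ^ 2 * (U' s) ^ 2 * (4 + κ * (rho s) ^ 2) ^ 2 / (16 * Δ s))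
    (hRpos : ∀ s ∈ Set.Ioo c d, 0 < R s)
    (hlam : ∀ s ∈ Set.Ioo c d,
      HasDerivAt lam
        (ε * (m * U s * (4 + κ * (rho s) ^ 2) / (4 * (rho s) ^ 2)) * Real.sqrt (R s)) s)
    (hvt : ∀ s ∈ Set.Ioo c d, ∀ t : ℝ, HasDerivAt (fun t' => v s t') (1 / m) t)
    (hvs : ∀ s ∈ Set.Ioo c d, ∀ t : ℝ,
      HasDerivAt (fun s' => v s' t)
        (-(ε * ((4 * τ - a * κ) * (rho s) ^ 2 - 4 * a) / (4 * m * U s * (rho s) ^ 2))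
          * Real.sqrt (R s)) s)
    (ψ : ℝ → ℝ → ℝ × ℝ × ℝ)
    (hψ : ∀ s t, ψ s t = (rho s, v s t, -lam s + a * v s t)) :
    ∀ s ∈ Set.Ioo c d, ∀ t : ℝ, ∀ ψs ψt : ℝ × ℝ × ℝ,
      HasDerivAt (fun s' => ψ s' t) ψs s →
      HasDerivAt (fun t' => ψ s t') ψt t →
      bcvInner κ τ (ψ s t) ψs ψs = 1 ∧
      bcvInner κ τ (ψ s t) ψs ψt = 0 ∧
      bcvInner κ τ (ψ s t) ψt ψt = (U s) ^ 2 := by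
  intro s hs t ψs ψt hψs hψt
  have hU := hU' s hs
  have hu0 : U s ≠ 0 := ne_of_gt (hUpos s hs)
  have hΔ0 : Δ s ≠ 0 := ne_of_gt (hΔpos s hs)
  have hD0 : D s ≠ 0 := ne_of_gt (hDpos s hs)
  have hW0 : (0:ℝ) < m ^ 2 * (U s) ^ 2 - a ^ 2 := hrad s hs
  have hSpos : 0 < Real.sqrt (Δ s) := Real.sqrt_pos.mpr (hΔpos s hs)
  have hS0 : Real.sqrt (Δ s) ≠ 0 := ne_of_gt hSpos
  have hQpos : 0 < (m ^ 2 * (U s) ^ 2 - a ^ 2) / D s := div_pos hW0 (hDpos s hs)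
  have hQ0 : (m ^ 2 * (U s) ^ 2 - a ^ 2) / D s ≠ 0 := ne_of_gt hQpos
  have hρpos : 0 < rho s := by
    rw [hrho s]
    have := Real.sqrt_pos.mpr hQpos
    linarith
  have hρ0 : rho s ≠ 0 := ne_of_gt hρpos
  have hB0 : (1 + κ / 4 * (rho s) ^ 2) ≠ 0 := by
    have := hBpos s hs
    rw [hBdef s] at this
    exact ne_of_gt this
  have hB4 : (4 + κ * (rho s) ^ 2) ≠ 0 := by
    intro h; apply hB0; linarith
  have hε2 : ε ^ 2 = 1 := by rcases hε with h | h <;> rw [h] <;> norm_num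
  have hSsq : Real.sqrt (Δ s) ^ 2
      = (1 - 2 * a * τ) ^ 2 + (4 * τ ^ 2 - κ) * (m ^ 2 * (U s) ^ 2 - a ^ 2) := by
    rw [Real.sq_sqrt (le_of_lt (hΔpos s hs)), hΔdef]
  have hP4 : (rho s) ^ 2 = 4 * ((m ^ 2 * (U s) ^ 2 - a ^ 2) / D s) := by
    rw [hrho s, mul_pow, Real.sq_sqrt (le_of_lt hQpos)]
    norm_num
  have hPDs : (rho s) ^ 2 * D s = 4 * (m ^ 2 * (U s) ^ 2 - a ^ 2) := by
    rw [hP4]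
    field_simp
  have hPD : (rho s) ^ 2 * ((1 + Real.sqrt (Δ s)) ^ 2 - 4 * τ ^ 2 * m ^ 2 * (U s) ^ 2)
      = 4 * (m ^ 2 * (U s) ^ 2 - a ^ 2) := by
    rw [← hDdef s]; exact hPDs
  have hDe0 : ((1 + Real.sqrt (Δ s)) ^ 2 - 4 * τ ^ 2 * m ^ 2 * (U s) ^ 2) ≠ 0 := by
    rw [← hDdef s]; exact hD0
  have hBD : (1 + κ / 4 * (rho s) ^ 2)
        * ((1 + Real.sqrt (Δ s)) ^ 2 - 4 * τ ^ 2 * m ^ 2 * (U s) ^ 2)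
      = ((1 + Real.sqrt (Δ s)) ^ 2 - 4 * τ ^ 2 * m ^ 2 * (U s) ^ 2)
        + κ * (m ^ 2 * (U s) ^ 2 - a ^ 2) := by
    linear_combination κ / 4 * hPD
  have hIc : ((rho s) ^ 2 + τ ^ 2 * ((rho s) ^ 2) ^ 2
        + a ^ 2 * (1 + κ / 4 * (rho s) ^ 2) ^ 2
        - 2 * a * τ * (rho s) ^ 2 * (1 + κ / 4 * (rho s) ^ 2))
        * ((1 + Real.sqrt (Δ s)) ^ 2 - 4 * τ ^ 2 * m ^ 2 * (U s) ^ 2) ^ 2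
      = (m ^ 2 * (U s) ^ 2 * (1 + κ / 4 * (rho s) ^ 2) ^ 2)
        * ((1 + Real.sqrt (Δ s)) ^ 2 - 4 * τ ^ 2 * m ^ 2 * (U s) ^ 2) ^ 2 := by
    linear_combination
      (-3 * m ^ 2 * (U s) ^ 2 - 4 * m ^ 2 * (U s) ^ 2 * Real.sqrt (Δ s)
          - m ^ 2 * (U s) ^ 2 * Real.sqrt (Δ s) ^ 2
          - κ * m ^ 4 * (U s) ^ 4 + 4 * τ ^ 2 * m ^ 4 * (U s) ^ 4
          - 4 * a * τ * m ^ 2 * (U s) ^ 2 + 3 * a ^ 2 + 4 * a ^ 2 * Real.sqrt (Δ s)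
          + a ^ 2 * Real.sqrt (Δ s) ^ 2 + 2 * a ^ 2 * κ * m ^ 2 * (U s) ^ 2
          - 4 * a ^ 2 * τ ^ 2 * m ^ 2 * (U s) ^ 2 + 4 * a ^ 3 * τ - a ^ 4 * κ) * hSsq
      + (((1 + Real.sqrt (Δ s)) ^ 2 - 4 * τ ^ 2 * m ^ 2 * (U s) ^ 2)
          + τ ^ 2 * ((rho s) ^ 2 * ((1 + Real.sqrt (Δ s)) ^ 2 - 4 * τ ^ 2 * m ^ 2 * (U s) ^ 2)
              + 4 * (m ^ 2 * (U s) ^ 2 - a ^ 2))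
          - 2 * a * τ * (1 + κ / 4 * (rho s) ^ 2)
            * ((1 + Real.sqrt (Δ s)) ^ 2 - 4 * τ ^ 2 * m ^ 2 * (U s) ^ 2)) * hPD
      + ((a ^ 2 - m ^ 2 * (U s) ^ 2)
          * ((1 + κ / 4 * (rho s) ^ 2)
              * ((1 + Real.sqrt (Δ s)) ^ 2 - 4 * τ ^ 2 * m ^ 2 * (U s) ^ 2)
            + ((1 + Real.sqrt (Δ s)) ^ 2 - 4 * τ ^ 2 * m ^ 2 * (U s) ^ 2)
            + κ * (m ^ 2 * (U s) ^ 2 - a ^ 2))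
          - 8 * a * τ * (m ^ 2 * (U s) ^ 2 - a ^ 2)) * hBD
  have hI := mul_right_cancel₀ (pow_ne_zero 2 hDe0) hIc
  -- derivative of rho
  have hWd : HasDerivAt (fun x => m ^ 2 * U x ^ 2 - a ^ 2) (2 * m ^ 2 * U s * U' s) s := by
    have h := ((hU.pow 2).const_mul (m ^ 2)).sub_const (a ^ 2)
    exact h.congr_deriv (by push_cast; ring)
  have hΔd : HasDerivAt Δ ((4 * τ ^ 2 - κ) * (2 * m ^ 2 * U s * U' s)) s := by
    have hΔfun : Δ = fun x => (1 - 2 * a * τ) ^ 2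
        + (4 * τ ^ 2 - κ) * (m ^ 2 * U x ^ 2 - a ^ 2) := funext hΔdef
    rw [hΔfun]
    exact (hWd.const_mul _).const_add _
  have hSd : HasDerivAt (fun x => Real.sqrt (Δ x))
      ((4 * τ ^ 2 - κ) * (2 * m ^ 2 * U s * U' s) / (2 * Real.sqrt (Δ s))) s :=
    hΔd.sqrt hΔ0
  have hDd : HasDerivAt D
      ((1 + Real.sqrt (Δ s)) * ((4 * τ ^ 2 - κ) * (2 * m ^ 2 * U s * U' s)) / Real.sqrt (Δ s)
        - 8 * τ ^ 2 * m ^ 2 * U s * U' s) s := by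
    have hDfun : D = fun x => (1 + Real.sqrt (Δ x)) ^ 2 - 4 * τ ^ 2 * m ^ 2 * U x ^ 2 :=
      funext hDdef
    rw [hDfun]
    have h := ((hSd.const_add 1).pow 2).sub ((hU.pow 2).const_mul (4 * τ ^ 2 * m ^ 2))
    refine h.congr_deriv ?_
    push_cast
    field_simp
    ring
  have hQd : HasDerivAt (fun x => (m ^ 2 * U x ^ 2 - a ^ 2) / D x)
      ((2 * m ^ 2 * U s * U' s * D s - (m ^ 2 * U s ^ 2 - a ^ 2)
          * ((1 + Real.sqrt (Δ s)) * ((4 * τ ^ 2 - κ) * (2 * m ^ 2 * U s * U' s))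
              / Real.sqrt (Δ s) - 8 * τ ^ 2 * m ^ 2 * U s * U' s)) / D s ^ 2) s :=
    hWd.div hDd hD0
  have hsq : Real.sqrt ((m ^ 2 * (U s) ^ 2 - a ^ 2) / D s) = rho s / 2 := by
    rw [hrho s]; ring
  have hρd : HasDerivAt rho
      (2 * ((2 * m ^ 2 * U s * U' s * D s - (m ^ 2 * U s ^ 2 - a ^ 2)
          * ((1 + Real.sqrt (Δ s)) * ((4 * τ ^ 2 - κ) * (2 * m ^ 2 * U s * U' s))
              / Real.sqrt (Δ s) - 8 * τ ^ 2 * m ^ 2 * U s * U' s)) / D s ^ 2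
        / (2 * Real.sqrt ((m ^ 2 * U s ^ 2 - a ^ 2) / D s)))) s := by
    have hρfun : rho = fun x => 2 * Real.sqrt ((m ^ 2 * U x ^ 2 - a ^ 2) / D x) := funext hrho
    rw [hρfun]
    exact (hQd.sqrt hQ0).const_mul 2
  have hρnice : HasDerivAt rho
      (m ^ 2 * U s * U' s * (1 + κ / 4 * (rho s) ^ 2) ^ 2
        / (Real.sqrt (Δ s) * rho s)) s := by
    refine hρd.congr_deriv ?_
    rw [hsq, hDdef]
    set Dx := (1 + Real.sqrt (Δ s)) ^ 2 - 4 * τ ^ 2 * m ^ 2 * (U s) ^ 2 with hDx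
    linear_combination (norm := (field_simp; ring1))
      (m ^ 2 * U s * U' s * (1 - Real.sqrt (Δ s) ^ 2 - κ * m ^ 2 * (U s) ^ 2
          + 4 * τ ^ 2 * m ^ 2 * (U s) ^ 2 + 4 * a * τ + a ^ 2 * κ)
        / (Real.sqrt (Δ s) * rho s
            * Dx ^ 2)) * hSsq
      + (-(m ^ 2 * U s * U' s * κ
            * (Dx
              + κ * (m ^ 2 * (U s) ^ 2 - a ^ 2)
              + (1 + κ / 4 * (rho s) ^ 2)
                * Dx))
          / (4 * Real.sqrt (Δ s) * rho s
              * Dx ^ 2)) * hPD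
  -- identify ψs and ψt
  have hvs' := hvs s hs t
  have hlamd := hlam s hs
  have hψsfun : (fun s' => ψ s' t) = fun s' => (rho s', v s' t, -lam s' + a * v s' t) :=
    funext fun x => hψ x t
  rw [hψsfun] at hψs
  have hψseq := hψs.unique (hρnice.prodMk (hvs'.prodMk ((hlamd.neg).add (hvs'.const_mul a))))
  have hψtfun : (fun t' => ψ s t') = fun t' => (rho s, v s t', -lam s + a * v s t') :=
    funext fun x => hψ s x
  rw [hψtfun] at hψt
  have hψteq := hψt.unique ((hasDerivAt_const t (rho s)).prodMk
    ((hvt s hs t).prodMk (((hvt s hs t).const_mul a).const_add (-lam s))))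
  subst hψseq hψteq
  -- square root facts for R
  have hq2 : Real.sqrt (R s) ^ 2 = R s := Real.sq_sqrt (le_of_lt (hRpos s hs))
  have hSΔ : Real.sqrt (Δ s) ^ 2 = Δ s := Real.sq_sqrt (le_of_lt (hΔpos s hs))
  have hq' : 16 * Real.sqrt (Δ s) ^ 2 * Real.sqrt (R s) ^ 2
      = 16 * Real.sqrt (Δ s) ^ 2 * (rho s) ^ 2
        - m ^ 4 * (U s) ^ 2 * (U' s) ^ 2 * (4 + κ * (rho s) ^ 2) ^ 2 := by
    rw [hq2, hSΔ, hRdef s]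
    field_simp
  refine ⟨?_, ?_, ?_⟩ <;> simp only [bcvInner, hψ]
  · linear_combination (norm := (field_simp; ring1))
      (1 / (16 * Real.sqrt (Δ s) ^ 2 * (rho s) ^ 2)) * hq'
      + (Real.sqrt (R s) ^ 2 / (rho s) ^ 2) * hε2
      + (ε ^ 2 * Real.sqrt (R s) ^ 2
            * (((4 * τ - a * κ) * (rho s) ^ 2 - 4 * a) / (4 * m * U s * (rho s) ^ 2)) ^ 2
            / (1 + κ / 4 * (rho s) ^ 2) ^ 2
          - ε ^ 2 * Real.sqrt (R s) ^ 2 / (rho s) ^ 4) * hI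
  · linear_combination (norm := (field_simp; ring1))
      (-(ε * Real.sqrt (R s)
            * (((4 * τ - a * κ) * (rho s) ^ 2 - 4 * a) / (4 * m * U s * (rho s) ^ 2)))
          / (m * (1 + κ / 4 * (rho s) ^ 2) ^ 2)) * hI
  · linear_combination (norm := (field_simp; ring1))
      (1 / (m ^ 2 * (1 + κ / 4 * (rho s) ^ 2) ^ 2)) * hI
end
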